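/- arXiv:1601.01913 — 3 statements merged into one kernel-verified Lean document; each statement's English description precedes it below -/
import Mathlib

section
/- The Appell–Lerch function satisfies m(x,q,z) = x^{-1} m(x^{-1}, q, z^{-1}) for generic nonzero x,z. -/
/-!
Two elementary symmetries combine. Reindexing the bilateral sum by `r ↦ 2 - r` turns the summand
of `m(x⁻¹, q, z⁻¹)` into `-x z⁻¹` times the summand of `m(x, q, z)`, and splitting off the first
factor of each `q`-Pochhammer product gives `j(z⁻¹; q) = -z⁻¹ j(z; q)`.
-/

open Complex

noncomputable def qp (q a : ℂ) : ℂ := ∏' i : ℕ, (1 - a * q ^ i)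

noncomputable def jt (x q : ℂ) : ℂ := qp q x * qp q (q / x) * qp q q

noncomputable def al (x q z : ℂ) : ℂ :=
  (jt z q)⁻¹ *
    ∑' r : ℤ, (-1 : ℂ) ^ r * q ^ (r * (r - 1) / 2) * z ^ r / (1 - q ^ (r - 1) * x * z)

lemma multipliable_one_sub_mul_pow (a : ℂ) {q : ℂ} (hq : ‖q‖ < 1) :
    Multipliable fun i : ℕ ↦ 1 - a * q ^ i := by
  simpa [sub_eq_add_neg] using multipliable_one_add_of_summable (f := fun i : ℕ ↦ -(a * q ^ i))
    (by simpa using (summable_geometric_of_lt_one (norm_nonneg q) hq).mul_left ‖a‖)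

lemma qp_eq_one_sub_mul_qp_mul (a : ℂ) {q : ℂ} (hq : ‖q‖ < 1) :
    qp q a = (1 - a) * qp q (q * a) := by
  have hshift : ∀ i : ℕ, a * q ^ (i + 1) = q * a * q ^ i := fun i ↦ by ring
  rw [qp, qp, tprod_eq_zero_mul'
    (by simpa only [hshift] using multipliable_one_sub_mul_pow (q * a) hq)]
  simp only [pow_zero, mul_one, hshift]

lemma jt_inv {q z : ℂ} (hq : ‖q‖ < 1) (hz : z ≠ 0) : jt z⁻¹ q = -z⁻¹ * jt z q := by
  rw [jt, jt, qp_eq_one_sub_mul_qp_mul z hq, qp_eq_one_sub_mul_qp_mul z⁻¹ hq,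
    div_inv_eq_mul, ← div_eq_mul_inv]
  field_simp
  ring

lemma neg_one_zpow_two_sub (r : ℤ) : (-1 : ℂ) ^ (2 - r) = (-1) ^ r := by
  simp [neg_one_zpow_eq_ite, Int.even_sub]

lemma two_sub_mul_two_sub_sub_one_div_two (r : ℤ) :
    (2 - r) * (2 - r - 1) / 2 = r * (r - 1) / 2 + (1 - r) := by
  rw [show (2 - r) * (2 - r - 1) = r * (r - 1) + (1 - r) * 2 by ring]
  exact Int.add_mul_ediv_right _ _ two_ne_zero

noncomputable def alTerm (x q z : ℂ) (r : ℤ) : ℂ :=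
  (-1 : ℂ) ^ r * q ^ (r * (r - 1) / 2) * z ^ r / (1 - q ^ (r - 1) * x * z)

lemma al_eq (x q z : ℂ) : al x q z = (jt z q)⁻¹ * ∑' r : ℤ, alTerm x q z r := rfl

lemma alTerm_inv_two_sub {q x z : ℂ} (hq : q ≠ 0) (hx : x ≠ 0) (hz : z ≠ 0) (r : ℤ) :
    alTerm x⁻¹ q z⁻¹ (2 - r) = -x * z⁻¹ * alTerm x q z r := by
  -- Splitting off the common factor `1 - q ^ (r - 1) * x * z`, which may vanish, lets both sides
  -- agree there too, as `_ / 0 = 0`.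
  have hden : 1 - (q ^ (r - 1))⁻¹ * x⁻¹ * z⁻¹ =
      -(q ^ (r - 1) * x * z)⁻¹ * (1 - q ^ (r - 1) * x * z) := by
    field_simp
    ring
  rw [alTerm, alTerm, neg_one_zpow_two_sub, two_sub_mul_two_sub_sub_one_div_two,
    zpow_add₀ hq, show (1 : ℤ) - r = -(r - 1) by ring, show (2 : ℤ) - r - 1 = -(r - 1) by ring,
    zpow_neg, show (2 : ℤ) - r = -r + 2 by ring, zpow_add₀ (inv_ne_zero hz), inv_zpow',
    neg_neg, hden, ← div_div]
  field_simp

lemma tsum_alTerm_inv {q x z : ℂ} (hq : q ≠ 0) (hx : x ≠ 0) (hz : z ≠ 0) :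
    ∑' r : ℤ, alTerm x⁻¹ q z⁻¹ r = -x * z⁻¹ * ∑' r : ℤ, alTerm x q z r := by
  rw [← tsum_mul_left, ← (Equiv.subLeft (2 : ℤ)).tsum_eq]
  exact tsum_congr (alTerm_inv_two_sub hq hx hz)

theorem stmt8_general (q x z : ℂ) (hq0 : 0 < ‖q‖) (hq1 : ‖q‖ < 1)
    (hx : x ≠ 0) (hz : z ≠ 0) :
    al x q z = x⁻¹ * al x⁻¹ q z⁻¹ := by
  rw [al_eq, al_eq, tsum_alTerm_inv (norm_pos_iff.mp hq0) hx hz, jt_inv hq1 hz]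
  field_simp

/-- `m(x,q,z) = x⁻¹ m(x⁻¹,q,z⁻¹)` for generic `x,z`. -/
theorem stmt8 (q x z : ℂ) (hq0 : 0 < ‖q‖) (hq1 : ‖q‖ < 1)
    (hx : x ≠ 0) (hz : z ≠ 0)
    (hjz : jt z q ≠ 0) (hjzi : jt z⁻¹ q ≠ 0)
    (hden : ∀ r : ℤ, q ^ r * x * z ≠ 1) :
    al x q z = x⁻¹ * al x⁻¹ q z⁻¹ :=
  stmt8_general q x z hq0 hq1 hx hz
end

section
/- Suppose H(x) is analytic on ℂ\{0\} and satisfies H(q^2 x) = (xq/(yz)) H(x) for all x ≠ 0, where 0<|q|<1 and y,z are fixed nonzero constants. Then H is identically zero. -/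
/-!
Iterating the functional equation gives `H ((q²)ⁿ x) = xⁿ q^(n²) / (yz)ⁿ · H x` for every `n : ℤ`.
Every `w ≠ 0` is `(q²)ⁿ x` with `x` in the compact annulus `|q|² ≤ |x| ≤ 1`, where `H` is bounded,
and `|x / yz|ⁿ |q|^(n²)` is bounded uniformly in `n` because the Gaussian factor `|q|^(n²)` wins.
So `H` is bounded on `ℂ \ {0}`; by Riemann's removable singularity theorem and Liouville's theorem
it is constant, and the only constant solution of the equation is `0`.
-/

open Complex Filter Topology Bornology Set

theorem zpow_mul_zpow_sq_le_exp {r u : ℝ} (hr0 : 0 < r) (hr1 : r < 1) (hu : 0 < u) (n : ℤ) :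
    u ^ n * r ^ (n ^ 2) ≤ Real.exp (Real.log u ^ 2 / (-4 * Real.log r)) := by
  have hlog : Real.log r < 0 := Real.log_neg hr0 hr1
  -- completing the square in `n`
  rw [← Real.exp_log (by positivity : 0 < u ^ n * r ^ (n ^ 2)), Real.exp_le_exp,
    Real.log_mul (by positivity) (by positivity), Real.log_zpow, Real.log_zpow,
    le_div_iff₀ (by linarith)]
  push_cast
  nlinarith [sq_nonneg (2 * Real.log r * n + Real.log u)]

theorem Complex.exists_const_of_differentiableOn_compl_singleton {E : Type*}
    [NormedAddCommGroup E] [NormedSpace ℂ E] [CompleteSpace E] {f : ℂ → E} {c : ℂ}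
    (hd : DifferentiableOn ℂ f {c}ᶜ) (hb : IsBounded (f '' {c}ᶜ)) :
    ∃ k, ∀ z ≠ c, f z = k := by
  set F := Function.update f c (limUnder (𝓝[≠] c) f)
  have hFf : EqOn F f {c}ᶜ := fun z hz => Function.update_of_ne hz _ _
  have hF : Differentiable ℂ F := by
    obtain ⟨C, hC⟩ := hb.exists_norm_le
    rw [← differentiableOn_univ]
    refine differentiableOn_update_limUnder_of_bddAbove univ_mem
      (by rwa [← compl_eq_univ_sdiff]) ⟨C, ?_⟩
    rintro _ ⟨z, hz, rfl⟩
    exact hC _ (mem_image_of_mem f (by simpa using hz))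
  have hrange : IsBounded (range F) := by
    rw [← image_univ, ← closure_compl_singleton c]
    refine (hb.closure).subset ((image_closure_subset_closure_image hF.continuous).trans ?_)
    rw [hFf.image_eq]
  obtain ⟨k, hk⟩ := hF.exists_const_forall_eq_of_bounded hrange
  exact ⟨k, fun z hz => (hFf hz).symm.trans (hk z)⟩

theorem exists_norm_mem_Ioc_and_eq_zpow_mul {a w : ℂ} (ha0 : 0 < ‖a‖) (ha1 : ‖a‖ < 1)
    (hw : w ≠ 0) :
    ∃ (n : ℤ) (x : ℂ), ‖x‖ ∈ Ioc ‖a‖ 1 ∧ w = a ^ n * x := by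
  obtain ⟨m, hm1, hm2⟩ := exists_mem_Ioc_zpow (norm_pos_iff.2 hw) ((one_lt_inv₀ ha0).2 ha1)
  have ha : a ≠ 0 := norm_pos_iff.1 ha0
  refine ⟨-m - 1, a ^ (m + 1) * w, ⟨?_, ?_⟩, ?_⟩
  · rw [norm_mul, norm_zpow]
    calc ‖a‖ = ‖a‖ ^ (m + 1) * ‖a‖⁻¹ ^ m := by
          rw [inv_zpow, zpow_add_one₀ ha0.ne']; field_simp
      _ < ‖a‖ ^ (m + 1) * ‖w‖ := by gcongr
  · rw [norm_mul, norm_zpow]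
    calc ‖a‖ ^ (m + 1) * ‖w‖ ≤ ‖a‖ ^ (m + 1) * ‖a‖⁻¹ ^ (m + 1) := by gcongr
      _ = 1 := by rw [inv_zpow, mul_inv_cancel₀ (by positivity)]
  · rw [← mul_assoc, ← zpow_add₀ ha]; simp

section FunctionalEquation

variable {f : ℂ → ℂ} {b d : ℂ}

theorem apply_zpow_mul_of_apply_sq_mul (hb : b ≠ 0) (hd : d ≠ 0)
    (hf : ∀ x ≠ 0, f (b ^ 2 * x) = x * b / d * f x) {x : ℂ} (hx : x ≠ 0) (n : ℤ) :
    f ((b ^ 2) ^ n * x) = x ^ n * b ^ (n ^ 2) / d ^ n * f x := by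
  have step : ∀ n : ℤ, f ((b ^ 2) ^ n * x) = x ^ n * b ^ (n ^ 2) / d ^ n * f x ↔
      f ((b ^ 2) ^ (n + 1) * x) = x ^ (n + 1) * b ^ ((n + 1) ^ 2) / d ^ (n + 1) * f x := by
    intro n
    set y := (b ^ 2) ^ n * x
    have hy : y ≠ 0 := by positivity
    have hyb : y * b / d ≠ 0 := div_ne_zero (mul_ne_zero hy hb) hd
    have hshift : (b ^ 2) ^ (n + 1) * x = b ^ 2 * y := by
      rw [zpow_add_one₀ (pow_ne_zero 2 hb)]; ring
    have hrhs : x ^ (n + 1) * b ^ ((n + 1) ^ 2) / d ^ (n + 1) * f x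
        = y * b / d * (x ^ n * b ^ (n ^ 2) / d ^ n * f x) := by
      rw [show (n + 1) ^ 2 = n ^ 2 + 2 * n + 1 by ring, zpow_add₀ hb, zpow_add₀ hb, zpow_one,
        zpow_mul, zpow_ofNat, zpow_add_one₀ hx, zpow_add_one₀ hd]
      ring
    rw [hshift, hf y hy, hrhs, mul_right_inj' hyb]
  induction n using Int.induction_on with
  | zero => simp
  | succ i ih => exact (step i).1 ih
  | pred i ih => exact (step (-i - 1)).2 (by simpa using ih)

theorem isBounded_image_compl_zero_of_apply_sq_mul (hb0 : 0 < ‖b‖) (hb1 : ‖b‖ < 1) (hd : d ≠ 0)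
    (hf : ∀ x ≠ 0, f (b ^ 2 * x) = x * b / d * f x) (hcont : ContinuousOn f {0}ᶜ) :
    IsBounded (f '' {0}ᶜ) := by
  have hb : b ≠ 0 := norm_pos_iff.1 hb0
  have hb2 : 0 < ‖b ^ 2‖ := norm_pos_iff.2 (pow_ne_zero 2 hb)
  set A : Set ℂ := Metric.closedBall 0 1 \ Metric.ball 0 ‖b ^ 2‖
  have hA0 : A ⊆ {0}ᶜ := fun x hx h0 => hx.2 (by rw [h0]; exact Metric.mem_ball_self hb2)
  obtain ⟨M, hM⟩ := ((isCompact_closedBall 0 1).diff Metric.isOpen_ball)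
    |>.exists_bound_of_continuousOn (hcont.mono hA0)
  set K := max |Real.log (‖b ^ 2‖ / ‖d‖)| |Real.log (1 / ‖d‖)| ^ 2
  refine isBounded_iff_forall_norm_le.2 ⟨Real.exp (K / (-4 * Real.log ‖b‖)) * M, ?_⟩
  rintro _ ⟨w, hw, rfl⟩
  obtain ⟨n, x, ⟨hx1, hx2⟩, rfl⟩ := exists_norm_mem_Ioc_and_eq_zpow_mul hb2
    (by rw [norm_pow]; nlinarith) hw
  have hx : x ≠ 0 := norm_pos_iff.1 (hb2.trans hx1)
  have hxA : x ∈ A := ⟨by simpa using hx2, by simpa using hx1.le⟩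
  rw [apply_zpow_mul_of_apply_sq_mul hb hd hf hx, norm_mul, norm_div, norm_mul, norm_zpow,
    norm_zpow, norm_zpow, ← div_mul_eq_mul_div, ← div_zpow]
  have hu : 0 < ‖x‖ / ‖d‖ := by positivity
  have hlog : Real.log (‖x‖ / ‖d‖) ^ 2 ≤ K := by
    have h1 := Real.log_le_log (by positivity) (div_le_div_of_nonneg_right hx1.le (norm_nonneg d))
    have h2 := Real.log_le_log hu (div_le_div_of_nonneg_right hx2 (norm_nonneg d))
    rw [← sq_abs]
    exact pow_le_pow_left₀ (abs_nonneg _) (abs_le_max_abs_abs h1 h2) 2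
  have hfx := hM x hxA
  have hlogb : 0 < -4 * Real.log ‖b‖ := by nlinarith [Real.log_neg hb0 hb1]
  calc (‖x‖ / ‖d‖) ^ n * ‖b‖ ^ n ^ 2 * ‖f x‖
      ≤ Real.exp (Real.log (‖x‖ / ‖d‖) ^ 2 / (-4 * Real.log ‖b‖)) * M :=
        mul_le_mul (zpow_mul_zpow_sq_le_exp hb0 hb1 hu n) hfx (norm_nonneg _) (Real.exp_pos _).le
    _ ≤ Real.exp (K / (-4 * Real.log ‖b‖)) * M := by
        gcongr
        exact (norm_nonneg _).trans hfx

end FunctionalEquation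

/-- Rigidity: an entire-on-`ℂ \ {0}` function satisfying `H(q²x) = (xq/(yz)) H(x)`
vanishes identically on `ℂ \ {0}`. -/
theorem stmt15 (q y z : ℂ) (hq0 : 0 < ‖q‖) (hq1 : ‖q‖ < 1)
    (hy : y ≠ 0) (hz : z ≠ 0) (H : ℂ → ℂ)
    (hH : ∀ x : ℂ, x ≠ 0 → AnalyticAt ℂ H x)
    (hfe : ∀ x : ℂ, x ≠ 0 → H (q ^ 2 * x) = x * q / (y * z) * H x) :
    ∀ x : ℂ, x ≠ 0 → H x = 0 := by
  have hq : q ≠ 0 := norm_pos_iff.1 hq0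
  have hyz : y * z ≠ 0 := mul_ne_zero hy hz
  have hd : DifferentiableOn ℂ H {0}ᶜ := fun x hx =>
    (hH x hx).differentiableAt.differentiableWithinAt
  obtain ⟨k, hk⟩ := exists_const_of_differentiableOn_compl_singleton hd
    (isBounded_image_compl_zero_of_apply_sq_mul hq0 hq1 hyz hfe hd.continuousOn)
  obtain ⟨x₀, hx₀⟩ : ∃ x₀ : ℂ, x₀ * q / (y * z) = 2 := ⟨2 * (y * z) / q, by field_simp⟩
  have hx₀0 : x₀ ≠ 0 := by rintro rfl; norm_num at hx₀
  have hk2 : k = 2 * k := by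
    have h := hfe x₀ hx₀0
    rwa [hk _ hx₀0, hk _ (mul_ne_zero (pow_ne_zero 2 hq) hx₀0), hx₀] at h
  intro x hx
  rw [hk x hx]
  linear_combination -hk2
end

section
/- For |q|<|y|<1 and |q|<|z|<1, define F(x,y,z;q) := (∑_{s,t≥0} - ∑_{s,t<0}) q^{st} y^s z^t / (1 - x q^{s+t}) for x not an integral power of q. Then F, viewed as a meromorphic function of x on ℂ\{0\}, has at x_0 = q^n (n∈ℤ) a simple pole with residue ∑_{s=1}^{n-1} q^{s(n-s)+n} y^{-s} z^{-(n-s)} (using the convention that for n ≤ 0 the sum ∑_{s=1}^{n-1} equals -∑_{s=n}^{0}). -/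
open Complex Filter Topology

/-- Sum `∑_{r=a}^{b} f r` with the convention `∑_{r=a}^{b} := -∑_{r=b+1}^{a-1}` for `b < a`. -/
noncomputable def cSum (a b : ℤ) (f : ℤ → ℂ) : ℂ :=
  if a ≤ b then ∑ r ∈ Finset.Icc a b, f r else -∑ r ∈ Finset.Icc (b + 1) (a - 1), f r

/-- `F(x,y,z;q) = (∑_{s,t≥0} - ∑_{s,t<0}) q^{st} y^s z^t / (1 - x q^{s+t})`. -/
noncomputable def Fd (q x y z : ℂ) : ℂ :=
  (∑' p : ℕ × ℕ, q ^ (p.1 * p.2) * y ^ p.1 * z ^ p.2 / (1 - x * q ^ (p.1 + p.2)))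
  - ∑' p : ℕ × ℕ,
      q ^ ((p.1 + 1) * (p.2 + 1)) * y ^ (-(p.1 + 1 : ℤ)) * z ^ (-(p.2 + 1 : ℤ)) /
        (1 - x * q ^ (-(p.1 + p.2 + 2 : ℤ)))

/-! Each summand of `F` has the form `c / (1 - x q^k)` with `k = s + t` or `k = -(s + t + 2)`.
Near `x₀ = qⁿ` only the terms with `k = -n` are singular, and for them
`(x - qⁿ) c / (1 - x q⁻ⁿ) = -qⁿ c` identically. The points `q^(-k)` accumulate only at `0` and `∞`,
so all other denominators stay uniformly away from `0` near `qⁿ`; as the coefficients are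
absolutely summable (`|q| < |y|, |z| < 1`), dominated convergence gives the limit of `(x - qⁿ) F`.
The singular terms lie on an antidiagonal `s + t = -n` of the first sum (nonempty only for `n ≤ 0`)
or `s + t + 2 = n` of the second (nonempty only for `n ≥ 2`); reindexing them by `s` gives the
residue. -/

section QPowers

variable {𝕜 : Type*} [NormedField 𝕜] {q : 𝕜}

lemma min_le_norm_one_sub_zpow (hq0 : q ≠ 0) (hq1 : ‖q‖ < 1) {j : ℤ} (hj : j ≠ 0) :
    min (1 - ‖q‖) (‖q‖⁻¹ - 1) ≤ ‖1 - q ^ j‖ := by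
  have hr : 0 < ‖q‖ := norm_pos_iff.mpr hq0
  rcases hj.lt_or_gt with hneg | hpos
  · have : ‖q‖ ^ (-1 : ℤ) ≤ ‖q‖ ^ j := zpow_le_zpow_right_of_le_one₀ hr hq1.le (by omega)
    rw [zpow_neg_one] at this
    calc min (1 - ‖q‖) (‖q‖⁻¹ - 1) ≤ ‖q ^ j‖ - ‖(1 : 𝕜)‖ := by
          rw [norm_one, norm_zpow]; exact (min_le_right _ _).trans (by linarith)
      _ ≤ ‖1 - q ^ j‖ := by rw [norm_sub_rev]; exact norm_sub_norm_le _ _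
  · have : ‖q‖ ^ j ≤ ‖q‖ ^ (1 : ℤ) := zpow_le_zpow_right_of_le_one₀ hr hq1.le (by omega)
    rw [zpow_one] at this
    calc min (1 - ‖q‖) (‖q‖⁻¹ - 1) ≤ ‖(1 : 𝕜)‖ - ‖q ^ j‖ := by
          rw [norm_one, norm_zpow]; exact (min_le_left _ _).trans (by linarith)
      _ ≤ ‖1 - q ^ j‖ := norm_sub_norm_le _ _

lemma exists_pos_eventually_le_norm_one_sub_mul_zpow (hq0 : q ≠ 0) (hq1 : ‖q‖ < 1) (n : ℤ) :
    ∃ δ > 0, ∀ᶠ x in 𝓝 (q ^ n), ∀ k : ℤ, k ≠ -n → δ ≤ ‖1 - x * q ^ k‖ := by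
  have hr : 0 < ‖q‖ := norm_pos_iff.mpr hq0
  set c := min (1 - ‖q‖) (‖q‖⁻¹ - 1)
  have hc : 0 < c := lt_min (by linarith) (by linarith [one_lt_inv₀ hr |>.mpr hq1])
  have hcn : 0 < ‖q‖ ^ n * c := by positivity
  refine ⟨min c (‖q‖ ^ n * c) / 2, by positivity, ?_⟩
  filter_upwards [Metric.closedBall_mem_nhds (q ^ n) (by positivity : 0 < min c (‖q‖ ^ n * c) / 2)]
    with x hx k hk
  rw [Metric.mem_closedBall, dist_eq_norm] at hx
  have hδc := min_le_left c (‖q‖ ^ n * c)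
  have hδcn := min_le_right c (‖q‖ ^ n * c)
  rcases le_or_gt 0 k with hk0 | hk0
  · -- `x q^k` is a small perturbation of `q^(n+k) ≠ 1`
    have hqk : ‖q ^ k‖ ≤ 1 := by
      rw [norm_zpow]; exact zpow_le_one₀ hr hq1.le hk0
    have hsplit : 1 - x * q ^ k = (1 - q ^ (n + k)) - (x - q ^ n) * q ^ k := by
      rw [zpow_add₀ hq0]; ring
    have h1 := min_le_norm_one_sub_zpow hq0 hq1 (j := n + k) (by omega)
    have h2 : ‖(x - q ^ n) * q ^ k‖ ≤ min c (‖q‖ ^ n * c) / 2 := by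
      rw [norm_mul]; nlinarith [norm_nonneg (x - q ^ n)]
    rw [hsplit]
    linarith [norm_sub_norm_le (1 - q ^ (n + k)) ((x - q ^ n) * q ^ k)]
  · -- `q^(-k)` is a point of `q^ℤ` other than `q^n`, and `‖q^k‖ ≥ 1`
    have hqk : 1 ≤ ‖q ^ k‖ := by
      rw [norm_zpow]; exact one_le_zpow_of_nonpos₀ hr hq1.le hk0.le
    have hsplit : 1 - x * q ^ k = q ^ k * (q ^ n * (q ^ (-k - n) - 1) - (x - q ^ n)) := by
      rw [zpow_sub₀ hq0, zpow_neg]; field_simp; ring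
    have h1 := min_le_norm_one_sub_zpow hq0 hq1 (j := -k - n) (by omega)
    have h2 : ‖q‖ ^ n * c ≤ ‖q ^ n * (q ^ (-k - n) - 1)‖ := by
      rw [norm_mul, norm_zpow, norm_sub_rev]; gcongr
    have h3 := norm_sub_norm_le (q ^ n * (q ^ (-k - n) - 1)) (x - q ^ n)
    rw [hsplit, norm_mul]
    nlinarith [norm_nonneg (q ^ n * (q ^ (-k - n) - 1) - (x - q ^ n))]

end QPowers

section Residue

variable {𝕜 ι : Type*} [NormedField 𝕜]

lemma sub_mul_div_one_sub_mul_of_mul_eq_one {a w x x₀ : 𝕜} (hw : w * x₀ = 1) (hx : x ≠ x₀) :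
    (x - x₀) * (a / (1 - x * w)) = -x₀ * a := by
  have hw0 : w ≠ 0 := left_ne_zero_of_mul_eq_one hw
  have hx' : x₀ - x ≠ 0 := sub_ne_zero.mpr hx.symm
  have hden : 1 - x * w = w * (x₀ - x) := by linear_combination -hw
  calc (x - x₀) * (a / (1 - x * w)) = -(a * w⁻¹) := by rw [hden]; field_simp; ring
    _ = -x₀ * a := by rw [← eq_inv_of_mul_eq_one_right hw]; ring

variable [CompleteSpace 𝕜]

lemma tendsto_sub_mul_tsum_div_one_sub_mul {c w : ι → 𝕜} {x₀ : 𝕜} (P : ι → Prop)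
    [DecidablePred P] (hc : Summable fun i => ‖c i‖) (hP : ∀ i, P i → w i * x₀ = 1)
    {δ : ℝ} (hδ : 0 < δ) (hbound : ∀ᶠ x in 𝓝 x₀, ∀ i, ¬P i → δ ≤ ‖1 - x * w i‖) :
    Tendsto (fun x => (x - x₀) * ∑' i, c i / (1 - x * w i)) (𝓝[≠] x₀)
      (𝓝 (-x₀ * ∑' i, if P i then c i else 0)) := by
  simp_rw [← tsum_mul_left]
  refine tendsto_tsum_of_dominated_convergence (bound := fun i => (‖x₀‖ + 1) * ‖c i‖)
    (hc.mul_left _) (fun i => ?_) ?_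
  · by_cases hi : P i
    · rw [if_pos hi]
      refine tendsto_const_nhds.congr' ?_
      filter_upwards [self_mem_nhdsWithin] with x hx
      exact (sub_mul_div_one_sub_mul_of_mul_eq_one (hP i hi) hx).symm
    · have hden : 1 - x₀ * w i ≠ 0 := by
        have := hbound.self_of_nhds i hi
        exact norm_pos_iff.mp (hδ.trans_le this)
      rw [if_neg hi, mul_zero]
      have : ContinuousAt (fun x => (x - x₀) * (c i / (1 - x * w i))) x₀ := by
        fun_prop (disch := exact hden)
      simpa using this.tendsto.mono_left nhdsWithin_le_nhds
  · filter_upwards [self_mem_nhdsWithin,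
      nhdsWithin_le_nhds (hbound.and (Metric.closedBall_mem_nhds x₀ hδ))]
      with x hx ⟨hxP, hxδ⟩ i
    rw [dist_eq_norm] at hxδ
    by_cases hi : P i
    · rw [sub_mul_div_one_sub_mul_of_mul_eq_one (hP i hi) hx, norm_mul, norm_neg]
      gcongr; linarith
    · have hle := hxP i hi
      calc ‖(x - x₀) * (c i / (1 - x * w i))‖
          = ‖x - x₀‖ * ‖c i‖ / ‖1 - x * w i‖ := by rw [norm_mul, norm_div, mul_div_assoc]
        _ ≤ δ * ‖c i‖ / δ := by gcongr
        _ ≤ (‖x₀‖ + 1) * ‖c i‖ := by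
          rw [mul_div_cancel_left₀ _ hδ.ne']; nlinarith [norm_nonneg x₀, norm_nonneg (c i)]

lemma tendsto_sub_zpow_mul_tsum_div_one_sub_mul_zpow {q : 𝕜} (hq0 : q ≠ 0) (hq1 : ‖q‖ < 1)
    (n : ℤ) {c : ι → 𝕜} (k : ι → ℤ) (hc : Summable fun i => ‖c i‖) :
    Tendsto (fun x => (x - q ^ n) * ∑' i, c i / (1 - x * q ^ k i)) (𝓝[≠] (q ^ n))
      (𝓝 (-q ^ n * ∑' i, if k i = -n then c i else 0)) := by
  obtain ⟨δ, hδ, hbound⟩ := exists_pos_eventually_le_norm_one_sub_mul_zpow hq0 hq1 n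
  refine tendsto_sub_mul_tsum_div_one_sub_mul (fun i => k i = -n) hc (fun i hi => ?_) hδ
    (hbound.mono fun x hx i hi => hx (k i) hi)
  rw [hi, ← zpow_add₀ hq0, neg_add_cancel, zpow_zero]

end Residue

section Summability

variable {𝕜 : Type*} [NormedField 𝕜]

lemma summable_norm_pow_mul_pow_mul_pow {q y z : 𝕜} (hq : ‖q‖ ≤ 1) (hy : ‖y‖ < 1)
    (hz : ‖z‖ < 1) : Summable fun p : ℕ × ℕ => ‖q ^ (p.1 * p.2) * y ^ p.1 * z ^ p.2‖ := by
  refine Summable.of_nonneg_of_le (fun _ => norm_nonneg _) (fun p => ?_)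
    ((summable_geometric_of_lt_one (norm_nonneg y) hy).mul_of_nonneg
      (summable_geometric_of_lt_one (norm_nonneg z) hz) (fun _ => by positivity)
      (fun _ => by positivity))
  rw [norm_mul, norm_mul, norm_pow, norm_pow, norm_pow]
  have : ‖q‖ ^ (p.1 * p.2) ≤ 1 := pow_le_one₀ (norm_nonneg q) hq
  have : 0 ≤ ‖y‖ ^ p.1 * ‖z‖ ^ p.2 := by positivity
  nlinarith [pow_nonneg (norm_nonneg q) (p.1 * p.2)]

lemma pow_mul_zpow_neg_mul_zpow_neg {q y z : 𝕜} (hy : y ≠ 0) (hz : z ≠ 0) (a b : ℕ) :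
    q ^ ((a + 1) * (b + 1)) * y ^ (-(a + 1 : ℤ)) * z ^ (-(b + 1 : ℤ))
      = q / (y * z) * (q ^ (a * b) * (q / y) ^ a * (q / z) ^ b) := by
  rw [show (-(a + 1 : ℤ)) = -((a + 1 : ℕ) : ℤ) by push_cast; ring,
    show (-(b + 1 : ℤ)) = -((b + 1 : ℕ) : ℤ) by push_cast; ring,
    zpow_neg, zpow_neg, zpow_natCast, zpow_natCast, div_pow, div_pow]
  field_simp
  ring

lemma summable_norm_pow_mul_zpow_neg_mul_zpow_neg {q y z : 𝕜} (hq : ‖q‖ ≤ 1)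
    (hqy : ‖q‖ < ‖y‖) (hqz : ‖q‖ < ‖z‖) :
    Summable fun p : ℕ × ℕ =>
      ‖q ^ ((p.1 + 1) * (p.2 + 1)) * y ^ (-(p.1 + 1 : ℤ)) * z ^ (-(p.2 + 1 : ℤ))‖ := by
  have hy : y ≠ 0 := norm_pos_iff.mp ((norm_nonneg q).trans_lt hqy)
  have hz : z ≠ 0 := norm_pos_iff.mp ((norm_nonneg q).trans_lt hqz)
  have hsum := summable_norm_pow_mul_pow_mul_pow hq
    (by rwa [norm_div, div_lt_one (norm_pos_iff.mpr hy)] : ‖q / y‖ < 1)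
    (by rwa [norm_div, div_lt_one (norm_pos_iff.mpr hz)] : ‖q / z‖ < 1)
  simpa only [pow_mul_zpow_neg_mul_zpow_neg hy hz, norm_mul] using hsum.mul_left ‖q / (y * z)‖

end Summability

section Reindexing

open Finset

lemma cSum_one_sub_one (n : ℤ) (g : ℤ → ℂ) :
    cSum 1 (n - 1) g = ∑ s ∈ Icc 1 (n - 1), g s - ∑ s ∈ Icc n 0, g s := by
  unfold cSum
  split_ifs with hn
  · rw [Icc_eq_empty_of_lt (show (0 : ℤ) < n by omega), sum_empty, sub_zero]
  · rw [Icc_eq_empty_of_lt (show n - 1 < 1 by omega), sum_empty, zero_sub, sub_add_cancel,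
      sub_self]

variable {M : Type*} [AddCommMonoid M] [TopologicalSpace M]

lemma sum_Icc_one_eq_tsum (n : ℤ) (g : ℤ → M) :
    ∑ s ∈ Icc 1 (n - 1), g s
      = ∑' p : ℕ × ℕ, if (p.1 + p.2 + 2 : ℤ) = n then g (p.1 + 1) else 0 := by
  rw [tsum_eq_sum (s := antidiagonal (n - 2).toNat) fun p hp => by
    rw [HasAntidiagonal.mem_antidiagonal] at hp; rw [if_neg (by omega)], ← sum_filter]
  refine sum_nbij' (fun s => ((s - 1).toNat, (n - 1 - s).toNat)) (fun p => p.1 + 1)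
    ?_ ?_ ?_ ?_ ?_ <;> simp only [mem_Icc, mem_filter, HasAntidiagonal.mem_antidiagonal]
  · omega
  · omega
  · intro s hs; omega
  · intro p hp; ext <;> simp; omega
  · intro s hs; congr; omega

lemma sum_Icc_zero_eq_tsum (n : ℤ) (g : ℤ → M) :
    ∑ s ∈ Icc n 0, g s = ∑' p : ℕ × ℕ, if (p.1 + p.2 : ℤ) = -n then g (-p.1) else 0 := by
  rw [tsum_eq_sum (s := antidiagonal (-n).toNat) fun p hp => by
    rw [HasAntidiagonal.mem_antidiagonal] at hp; rw [if_neg (by omega)], ← sum_filter]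
  refine sum_nbij' (fun s => ((-s).toNat, (s - n).toNat)) (fun p => -p.1)
    ?_ ?_ ?_ ?_ ?_ <;> simp only [mem_Icc, mem_filter, HasAntidiagonal.mem_antidiagonal]
  · omega
  · omega
  · intro s hs; omega
  · intro p hp; ext <;> simp; omega
  · intro s hs; congr; omega

end Reindexing

lemma residue_eq_cSum {q y z : ℂ} (hq : q ≠ 0) (n : ℤ) :
    -q ^ n * (∑' p : ℕ × ℕ,
        if ((p.1 + p.2 : ℕ) : ℤ) = -n then q ^ (p.1 * p.2) * y ^ p.1 * z ^ p.2 else 0)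
      - -q ^ n * (∑' p : ℕ × ℕ, if -(p.1 + p.2 + 2 : ℤ) = -n then
          q ^ ((p.1 + 1) * (p.2 + 1)) * y ^ (-(p.1 + 1 : ℤ)) * z ^ (-(p.2 + 1 : ℤ)) else 0)
      = cSum 1 (n - 1) (fun s => q ^ (s * (n - s) + n) * y ^ (-s) * z ^ (-(n - s))) := by
  rw [cSum_one_sub_one, sum_Icc_one_eq_tsum, sum_Icc_zero_eq_tsum, neg_mul, neg_mul,
    sub_neg_eq_add, neg_add_eq_sub, ← tsum_mul_left, ← tsum_mul_left]
  congr 1 <;> refine tsum_congr fun p => ?_ <;> split_ifs <;> try omega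
  · have hn : n - (p.1 + 1) = p.2 + 1 := by omega
    rw [hn, show ((p.1 : ℤ) + 1) * (p.2 + 1) + n = (((p.1 + 1) * (p.2 + 1) : ℕ) : ℤ) + n by
      push_cast; ring, zpow_add₀ hq, zpow_natCast]
    ring
  · simp
  · have hn : n - -(p.1 : ℤ) = -p.2 := by omega
    rw [hn, show -(p.1 : ℤ) * -p.2 + n = ((p.1 * p.2 : ℕ) : ℤ) + n by push_cast; ring,
      zpow_add₀ hq, zpow_natCast, neg_neg, neg_neg, zpow_natCast, zpow_natCast]
    ring
  · simp

/-- `F` has a simple pole at `x₀ = qⁿ` with residue `∑_{s=1}^{n-1} q^{s(n-s)+n} y^{-s} z^{-(n-s)}`. -/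
theorem stmt16 (q y z : ℂ) (hq0 : 0 < ‖q‖) (hq1 : ‖q‖ < 1)
    (hqy : ‖q‖ < ‖y‖) (hy1 : ‖y‖ < 1)
    (hqz : ‖q‖ < ‖z‖) (hz1 : ‖z‖ < 1) (n : ℤ) :
    Tendsto (fun x : ℂ => (x - q ^ n) * Fd q x y z) (𝓝[≠] (q ^ n))
      (𝓝 (cSum 1 (n - 1) (fun s => q ^ (s * (n - s) + n) * y ^ (-s) * z ^ (-(n - s))))) := by
  have hq : q ≠ 0 := norm_pos_iff.mp hq0
  have hnonneg := tendsto_sub_zpow_mul_tsum_div_one_sub_mul_zpow hq hq1 n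
    (fun p : ℕ × ℕ => ((p.1 + p.2 : ℕ) : ℤ))
    (summable_norm_pow_mul_pow_mul_pow hq1.le hy1 hz1)
  have hneg := tendsto_sub_zpow_mul_tsum_div_one_sub_mul_zpow hq hq1 n
    (fun p : ℕ × ℕ => -(p.1 + p.2 + 2 : ℤ))
    (summable_norm_pow_mul_zpow_neg_mul_zpow_neg hq1.le hqy hqz)
  simp only [zpow_natCast] at hnonneg
  rw [← residue_eq_cSum hq n]
  simpa only [Fd, mul_sub] using hnonneg.sub hneg
end
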